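/- arXiv:1607.01292 — 4 statements merged into one kernel-verified Lean document; each statement's English description precedes it below -/
import Mathlib

section
/- Proposition 2.8 (negative part): if the partition λ is not a rectangle (i.e. not all parts λᵢ are equal), then there exist no d₁, d₂ ∈ ℕ₀ and no sign ε ∈ {1, −1} such that C_λ(x^{−1}, q^{−1}) = ε · x^{−d₁} q^{−d₂} C_λ(x,q) holds in ℤ[x^{±1}, q^{±1}]. -/
open Finset

/-- The letter (`0`-based) at (`0`-based) position `i` of the word `w`;
junk value `0` out of range. -/
def letterAt {N m : ℕ} (w : Fin N → Fin m) (i : ℕ) : ℕ :=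
  if h : i < N then (w ⟨i, h⟩ : ℕ) else 0

/-- Descent set: the `1`-based positions `i ∈ {1,…,N−1}` with `w_i > w_{i+1}`. -/
def desSet {N m : ℕ} (w : Fin N → Fin m) : Finset ℕ :=
  (Finset.Ico 1 N).filter fun i => letterAt w i < letterAt w (i - 1)

/-- Descent number `des`. -/
def des {N m : ℕ} (w : Fin N → Fin m) : ℕ := (desSet w).card

/-- Major index `maj`. -/
def maj {N m : ℕ} (w : Fin N → Fin m) : ℕ := ∑ i ∈ desSet w, i

/-- Multiset permutations: words of length `N` over the alphabet `Fin m` (the letter `i+1`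
of `{1,…,m}` being encoded by `i : Fin m`) in which letter `i` occurs exactly `lam i` times. -/
def multisetPerms (N m : ℕ) (lam : Fin m → ℕ) : Finset (Fin N → Fin m) :=
  Finset.univ.filter fun w => ∀ i, (Finset.univ.filter fun j => w j = i).card = lam i

/-- The monomial `x^a q^b` (with `(a,b) ∈ ℤ²`) in the Laurent polynomial ring `ℤ[x^{±1},q^{±1}]`,
realized as the group algebra `ℤ[ℤ²]`. -/
noncomputable def laurentMonomial (a b : ℤ) (c : ℤ) : AddMonoidAlgebra ℤ (ℤ × ℤ) :=
  AddMonoidAlgebra.single (a, b) c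

/-!
Every descent top is a letter other than the smallest one, so `des w ≤ N - λ₁`, with equality
exactly for the words made of `λ₁` strictly decreasing runs, each ending in the smallest letter.
A functional equation makes the coefficients of `C_λ` symmetric about `(d₁, d₂)`. Since the sorted
word is the only word without descents, this forces `ε = 1` and `d₁ = N - λ₁`, and it sends every
word with `N - λ₁` descents to the single point `(d₁, d₂)`, whose coefficient is `1`. When `λ` is
not a rectangle, reading the columns of its Young diagram as decreasing runs in two different
orders gives two such words.
-/

section GeneratingFunction

variable {α : Type*}

open AddMonoidAlgebra

theorem coeff_sum_single_one {G : Type*} [DecidableEq G] (s : Finset α) (f : α → G) (p : G) :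
    (∑ a ∈ s, single (f a) (1 : ℤ)).coeff p = #{a ∈ s | f a = p} := by
  simp [coeff_sum, Finsupp.single_apply, Finset.sum_boole]

theorem card_fiber_eq_of_sum_single_neg_eq {G : Type*} [AddCommGroup G] [DecidableEq G]
    {s : Finset α} {f : α → G} {d : G} {ε : ℤ}
    (h : ∑ a ∈ s, single (-f a) (1 : ℤ) = single (-d) ε * ∑ a ∈ s, single (f a) 1) (p : G) :
    (#{a ∈ s | f a = p} : ℤ) = ε * #{a ∈ s | f a = d - p} := by
  have := congrArg (coeff · (-p)) h
  simp only [coeff_single_mul_apply, coeff_sum_single_one, neg_neg, neg_inj] at this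
  rwa [← sub_eq_add_neg] at this

theorem apply_eq_of_fst_eq_max {s : Finset α} {f : α → ℤ × ℤ} {d : ℤ × ℤ} {D : ℤ}
    (hsymm : ∀ p, #{a ∈ s | f a = p} = #{a ∈ s | f a = d - p})
    (hnonneg : ∀ a ∈ s, 0 ≤ (f a).1) (hle : ∀ a ∈ s, (f a).1 ≤ D)
    (hzero : ∀ a ∈ s, (f a).1 = 0 → (f a).2 = 0) (h0 : ∃ a ∈ s, f a = 0) {u : α} (hu : u ∈ s)
    (huD : (f u).1 = D) : f u = d := by
  have hrefl (a) (ha : a ∈ s) : ∃ b ∈ s, f b = d - f a := by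
    have hfa : 0 < #{b ∈ s | f b = f a} := card_pos.2 ⟨a, mem_filter.2 ⟨ha, rfl⟩⟩
    obtain ⟨b, hb⟩ := card_pos.1 (hsymm (f a) ▸ hfa)
    exact ⟨b, mem_filter.1 hb⟩
  obtain ⟨a, ha, hfa⟩ := h0
  obtain ⟨b, hb, hfb⟩ := hrefl a ha
  obtain ⟨c, hc, hfc⟩ := hrefl u hu
  rw [hfa, sub_zero] at hfb
  have hd : d.1 ≤ D := hfb ▸ hle b hb
  have hc1 : (f c).1 = 0 := by
    have := hnonneg c hc
    rw [hfc, Prod.fst_sub] at this ⊢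
    omega
  have hc2 := hzero c hc hc1
  rw [hfc, Prod.fst_sub] at hc1
  rw [hfc, Prod.snd_sub] at hc2
  exact Prod.ext (by omega) (by omega)

end GeneratingFunction

section Descents

variable {N m : ℕ} (w : Fin N → Fin m)

theorem letterAt_val (j : Fin N) : letterAt w j = w j := dif_pos j.isLt

theorem desSet_eq_image :
    desSet w = ({j | ∃ h : (j : ℕ) + 1 < N, w ⟨j + 1, h⟩ < w j} : Finset (Fin N)).image
      (fun j : Fin N => (j : ℕ) + 1) := by
  ext i
  simp only [desSet, mem_filter, mem_Ico, mem_image, mem_univ, true_and]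
  constructor
  · rintro ⟨⟨hi1, hiN⟩, hlt⟩
    refine ⟨⟨i - 1, by omega⟩, ⟨by simp; omega, ?_⟩, by simp; omega⟩
    rw [letterAt, dif_pos hiN, letterAt, dif_pos (by omega)] at hlt
    have hi : (⟨i - 1 + 1, by omega⟩ : Fin N) = ⟨i, hiN⟩ := Fin.ext (by simp only; omega)
    simpa only [hi, Fin.lt_def] using hlt
  · rintro ⟨j, ⟨h, hlt⟩, rfl⟩
    refine ⟨⟨by omega, h⟩, ?_⟩
    rw [Nat.add_sub_cancel, letterAt_val, letterAt, dif_pos h]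
    exact hlt

theorem des_eq_card : des w = #{j : Fin N | ∃ h : (j : ℕ) + 1 < N, w ⟨j + 1, h⟩ < w j} := by
  rw [des, desSet_eq_image, card_image_of_injective]
  exact fun a b h => Fin.ext (by simpa using h)

theorem des_le_card_val_ne_zero : des w ≤ #{j | (w j : ℕ) ≠ 0} := by
  rw [des_eq_card]
  refine card_le_card (monotone_filter_right _ fun j _ ⟨_, hlt⟩ => ?_)
  rw [Fin.lt_def] at hlt
  omega

theorem des_eq_card_val_ne_zero
    (h : ∀ j : Fin N, (w j : ℕ) ≠ 0 → ∃ h : (j : ℕ) + 1 < N, w ⟨j + 1, h⟩ < w j) :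
    des w = #{j | (w j : ℕ) ≠ 0} := by
  refine le_antisymm (des_le_card_val_ne_zero w) ?_
  rw [des_eq_card]
  exact card_le_card (monotone_filter_right _ fun j _ => h j)

theorem des_eq_zero_iff_monotone : des w = 0 ↔ Monotone w := by
  rw [des_eq_card, card_eq_zero, filter_eq_empty_iff]
  cases N with
  | zero => simp [Subsingleton.monotone]
  | succ n =>
    rw [Fin.monotone_iff_le_succ]
    constructor
    · intro h i
      simpa [Fin.succ] using h (mem_univ i.castSucc)
    · rintro h j - ⟨hj, hlt⟩
      exact (h ⟨j, by omega⟩).not_gt hlt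

theorem maj_eq_zero_of_des_eq_zero (h : des w = 0) : maj w = 0 := by
  rw [maj, card_eq_zero.1 h, sum_empty]

end Descents

theorem card_filter_comp_equiv {ι κ : Type*} [Fintype ι] [Fintype κ] (e : ι ≃ κ) (p : κ → Prop)
    [DecidablePred p] : #{j | p (e j)} = #{k | p k} := by
  simp only [card_filter]
  exact e.sum_comp fun k => if p k then 1 else 0

section SortedWord

variable {N m : ℕ}

theorem mem_multisetPerms {lam : Fin m → ℕ} {w : Fin N → Fin m} :
    w ∈ multisetPerms N m lam ↔ ∀ i, #{j | w j = i} = lam i := by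
  simp [multisetPerms]

theorem eq_of_monotone_of_card_fiber_eq {w w' : Fin N → Fin m} (hw : Monotone w)
    (hw' : Monotone w') (h : ∀ i, #{j | w j = i} = #{j | w' j = i}) : w = w' := by
  refine List.ofFn_injective <| List.Perm.eq_of_sortedLE (List.sortedLE_ofFn_iff.2 hw)
    (List.sortedLE_ofFn_iff.2 hw') ?_
  rw [← Multiset.coe_eq_coe, ← Fin.univ_val_map, ← Fin.univ_val_map]
  ext i
  simp only [Multiset.count_map, eq_comm (a := i)]
  exact h i

theorem existsUnique_des_eq_zero {lam : Fin m → ℕ} (hS : (multisetPerms N m lam).Nonempty) :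
    ∃! s, s ∈ multisetPerms N m lam ∧ des s = 0 := by
  obtain ⟨w, hw⟩ := hS
  rw [mem_multisetPerms] at hw
  refine ⟨w ∘ Tuple.sort w, ⟨?_, ?_⟩, ?_⟩
  · exact mem_multisetPerms.2 fun i => (card_filter_comp_equiv _ (w · = i)).trans (hw i)
  · exact (des_eq_zero_iff_monotone _).2 (Tuple.monotone_sort w)
  · rintro s ⟨hs, hs0⟩
    rw [mem_multisetPerms] at hs
    refine eq_of_monotone_of_card_fiber_eq ((des_eq_zero_iff_monotone s).1 hs0)
      (Tuple.monotone_sort w) fun i => ?_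
    rw [hs, ← hw]
    exact (card_filter_comp_equiv _ (w · = i)).symm

theorem card_filter_des_maj_eq_zero {lam : Fin m → ℕ} (hS : (multisetPerms N m lam).Nonempty) :
    #{w ∈ multisetPerms N m lam | ((des w : ℤ), (maj w : ℤ)) = 0} = 1 := by
  obtain ⟨s, hs, huniq⟩ := existsUnique_des_eq_zero hS
  refine card_eq_one.2 ⟨s, ext fun w => ?_⟩
  simp only [mem_filter, mem_singleton, Prod.ext_iff, Prod.fst_zero, Prod.snd_zero,
    Nat.cast_eq_zero]
  constructor
  · exact fun ⟨hw, hw0, _⟩ => huniq w ⟨hw, hw0⟩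
  · rintro rfl
    exact ⟨hs.1, hs.2, maj_eq_zero_of_des_eq_zero w hs.2⟩

theorem card_val_ne_zero_eq (w : Fin N → Fin m) :
    #{j | (w j : ℕ) ≠ 0} = N - #{j | (w j : ℕ) = 0} := by
  have := card_filter_add_card_filter_not (s := univ) fun j => (w j : ℕ) = 0
  rw [card_univ, Fintype.card_fin] at this
  simp only [ne_eq]
  omega

theorem des_le_of_mem_multisetPerms [NeZero m] {lam : Fin m → ℕ} {w : Fin N → Fin m}
    (hw : w ∈ multisetPerms N m lam) : des w ≤ N - lam 0 := by
  have hzero : #{j | (w j : ℕ) = 0} = lam 0 := by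
    simpa only [Fin.val_eq_zero_iff] using mem_multisetPerms.1 hw 0
  rw [← hzero, ← card_val_ne_zero_eq]
  exact des_le_card_val_ne_zero w

end SortedWord

section ColumnWord

variable {L N m : ℕ} (col : Fin L → ℕ) (hcol : ∀ k, col k ≤ m) (hN : ∑ k, col k = N)

/-- The word whose `k`-th block is the strictly decreasing run `col k - 1, …, 1, 0`. -/
def columnWord : Fin N → Fin m :=
  (fun q : (k : Fin L) × Fin (col k) => Fin.castLE (hcol q.1) q.2.rev) ∘
    finSigmaFinEquiv.symm ∘ Fin.cast hN.symm

theorem columnWord_cast_finSigmaFinEquiv (q : (k : Fin L) × Fin (col k)) :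
    columnWord col hcol hN (Fin.cast hN (finSigmaFinEquiv q)) = Fin.castLE (hcol q.1) q.2.rev := by
  rw [columnWord, Function.comp_apply, Function.comp_apply, Fin.cast_cast, Fin.cast_eq_self,
    Equiv.symm_apply_apply]

theorem card_columnWord_fiber (i : ℕ) :
    #{p | (columnWord col hcol hN p : ℕ) = i} = #{k | i < col k} := by
  simp only [card_filter]
  rw [← (finSigmaFinEquiv.trans (finCongr hN)).sum_comp, Fintype.sum_sigma]
  refine sum_congr rfl fun k _ => ?_
  simp only [Equiv.trans_apply, finCongr_apply, columnWord_cast_finSigmaFinEquiv, Fin.val_castLE]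
  rw [← Equiv.sum_comp Fin.revPerm]
  simp only [Fin.revPerm_apply, Fin.rev_rev]
  rw [Fin.sum_univ_eq_sum_range (fun j => if j = i then 1 else 0), sum_ite_eq']
  simp only [mem_range]

theorem des_columnWord (hpos : ∀ k, 0 < col k) : des (columnWord col hcol hN) = N - L := by
  rw [des_eq_card_val_ne_zero, card_val_ne_zero_eq, card_columnWord_fiber,
    filter_true_of_mem fun k _ => hpos k, card_univ, Fintype.card_fin]
  intro p hp
  obtain ⟨⟨k, j⟩, rfl⟩ := (finSigmaFinEquiv.trans (finCongr hN)).surjective p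
  simp only [Equiv.trans_apply, finCongr_apply, columnWord_cast_finSigmaFinEquiv, Fin.val_castLE,
    Fin.val_rev] at hp ⊢
  have hj : (j : ℕ) + 1 < col k := by omega
  have hnext : (Fin.cast hN (finSigmaFinEquiv ⟨k, j⟩) : ℕ) + 1
      = Fin.cast hN (finSigmaFinEquiv ⟨k, ⟨j + 1, hj⟩⟩) := by
    simp [finSigmaFinEquiv_apply, add_assoc]
  refine ⟨hnext ▸ Fin.isLt _, ?_⟩
  simp only [hnext, Fin.eta, columnWord_cast_finSigmaFinEquiv, Fin.lt_def, Fin.val_castLE,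
    Fin.val_rev]
  omega

theorem columnWord_mem_multisetPerms {lam : Fin m → ℕ}
    (hfib : ∀ i : Fin m, #{k | (i : ℕ) < col k} = lam i) :
    columnWord col hcol hN ∈ multisetPerms N m lam :=
  mem_multisetPerms.2 fun i => by
    simpa only [Fin.val_inj] using (card_columnWord_fiber col hcol hN i).trans (hfib i)

theorem columnWord_zero (hL : 0 < L) (hcol0 : 0 < col ⟨0, hL⟩) (hN0 : 0 < N) :
    (columnWord col hcol hN ⟨0, hN0⟩ : ℕ) = col ⟨0, hL⟩ - 1 := by
  have h0 : (⟨0, hN0⟩ : Fin N) = Fin.cast hN (finSigmaFinEquiv ⟨⟨0, hL⟩, ⟨0, hcol0⟩⟩) := by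
    ext
    simp [finSigmaFinEquiv_apply]
  rw [h0, columnWord_cast_finSigmaFinEquiv, Fin.val_castLE, Fin.val_rev]

end ColumnWord

section ConjugatePartition

variable {m : ℕ} {lam : Fin m → ℕ}

/-- The `t`-th part (`0`-based) of the conjugate partition. -/
def conjugatePart (lam : Fin m → ℕ) (t : ℕ) : ℕ := #{i | t < lam i}

theorem conjugatePart_le (t : ℕ) : conjugatePart lam t ≤ m :=
  (card_filter_le _ _).trans (card_univ.trans (Fintype.card_fin m)).le

theorem conjugatePart_zero (hpos : ∀ i, 1 ≤ lam i) : conjugatePart lam 0 = m := by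
  rw [conjugatePart, filter_true_of_mem (p := fun i => 0 < lam i) fun i _ => hpos i, card_univ,
    Fintype.card_fin]

theorem lt_conjugatePart_iff (hanti : Antitone lam) {t : ℕ} {i : Fin m} :
    (i : ℕ) < conjugatePart lam t ↔ t < lam i := by
  constructor
  · intro hi
    by_contra! hle
    have hsub : ({i | t < lam i} : Finset (Fin m)) ⊆ Iio i := fun j hj => by
      by_contra! hij
      exact (mem_filter.1 hj).2.not_ge ((hanti (not_lt.1 (mem_Iio.not.1 hij))).trans hle)
    have := card_le_card hsub
    rw [Fin.card_Iio] at this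
    exact (hi.trans_le this).false
  · intro hi
    have hsub : Iic i ⊆ ({i | t < lam i} : Finset (Fin m)) := fun j hj =>
      mem_filter.2 ⟨mem_univ _, hi.trans_le (hanti (mem_Iic.1 hj))⟩
    have := card_le_card hsub
    rw [Fin.card_Iic] at this
    exact this

theorem card_lt_conjugatePart (hanti : Antitone lam) {L : ℕ} {i : Fin m} (hi : lam i ≤ L) :
    #{k : Fin L | (i : ℕ) < conjugatePart lam k} = lam i := by
  simp only [lt_conjugatePart_iff hanti, Fin.card_filter_val_lt, min_eq_right hi]

theorem sum_conjugatePart {L : ℕ} (hL : ∀ i, lam i ≤ L) :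
    ∑ k : Fin L, conjugatePart lam k = ∑ i, lam i := by
  simp only [conjugatePart, card_filter]
  rw [sum_comm]
  refine sum_congr rfl fun i _ => ?_
  rw [← card_filter, Fin.card_filter_val_lt, min_eq_right (hL i)]

end ConjugatePartition

theorem exists_ne_des_eq_of_not_rectangle {m N : ℕ} [NeZero m] {lam : Fin m → ℕ}
    (hanti : Antitone lam) (hpos : ∀ i, 1 ≤ lam i) (hN : N = ∑ i, lam i)
    (hnotrect : ¬ ∀ i j, lam i = lam j) :
    ∃ u ∈ multisetPerms N m lam, ∃ v ∈ multisetPerms N m lam,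
      u ≠ v ∧ des u = N - lam 0 ∧ des v = N - lam 0 := by
  set L := lam 0
  have hL : ∀ i, lam i ≤ L := fun i => hanti (Fin.zero_le i)
  have hL0 : 0 < L := hpos 0
  have hcolpos (k : Fin L) : 0 < conjugatePart lam k := by
    simpa using (lt_conjugatePart_iff hanti (i := 0)).2 k.isLt
  have hNu : ∑ k : Fin L, conjugatePart lam k = N := (sum_conjugatePart hL).trans hN.symm
  have hNv : ∑ k : Fin L, conjugatePart lam k.rev = N :=
    (Equiv.sum_comp Fin.revPerm fun k : Fin L => conjugatePart lam k).trans hNu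
  -- `u` lists the columns of the Young diagram from left to right, `v` from right to left.
  set u := columnWord _ (fun k => conjugatePart_le _) hNu
  set v := columnWord _ (fun k => conjugatePart_le _) hNv
  have hN0 : 0 < N := hNu ▸ sum_pos (fun k _ => hcolpos k) ⟨⟨0, hL0⟩, mem_univ _⟩
  have hu0 : (u ⟨0, hN0⟩ : ℕ) = m - 1 := by
    rw [columnWord_zero _ _ _ hL0 (hcolpos _), conjugatePart_zero hpos]
  have hv0 : (v ⟨0, hN0⟩ : ℕ) < m - 1 := by
    obtain ⟨i, hi⟩ : ∃ i, lam i < L := by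
      by_contra! h
      exact hnotrect fun i j => (le_antisymm (hL i) (h i)).trans (le_antisymm (hL j) (h j)).symm
    have hlast : ¬ (i : ℕ) < conjugatePart lam (L - 1) := by
      rw [lt_conjugatePart_iff hanti]
      omega
    have := hcolpos (Fin.rev ⟨0, hL0⟩)
    rw [columnWord_zero _ _ _ hL0 (hcolpos _)]
    simp only [Fin.val_rev, zero_add] at this ⊢
    omega
  refine ⟨u, columnWord_mem_multisetPerms _ _ _ fun i => card_lt_conjugatePart hanti (hL i), v,
    columnWord_mem_multisetPerms _ _ _ fun i => ?_, fun huv => (huv ▸ hv0).ne hu0,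
    des_columnWord _ _ _ hcolpos, des_columnWord _ _ _ fun k => hcolpos k.rev⟩
  exact (card_filter_comp_equiv Fin.revPerm fun k : Fin L => (i : ℕ) < conjugatePart lam k).trans
    (card_lt_conjugatePart hanti (hL i))

/-- **Proposition 2.8 (negative part)**: if the partition `λ` is not a rectangle, then there
are no `d₁, d₂ ∈ ℕ₀` and no sign `ε ∈ {1,−1}` with
`C_λ(x^{−1},q^{−1}) = ε · x^{−d₁} q^{−d₂} C_λ(x,q)` in `ℤ[x^{±1},q^{±1}]`. -/
theorem no_functional_equation_of_not_rectangle (m N : ℕ) (lam : Fin m → ℕ)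
    (hanti : Antitone lam) (hpos : ∀ i, 1 ≤ lam i) (hN : N = ∑ i, lam i)
    (hnotrect : ¬ ∀ i j, lam i = lam j) :
    ¬ ∃ (d₁ d₂ : ℕ) (ε : ℤ), (ε = 1 ∨ ε = -1) ∧
      ∑ w ∈ multisetPerms N m lam,
          laurentMonomial (-(des w : ℤ)) (-(maj w : ℤ)) 1 =
        laurentMonomial (-(d₁ : ℤ)) (-(d₂ : ℤ)) ε *
          ∑ w ∈ multisetPerms N m lam,
            laurentMonomial (des w : ℤ) (maj w : ℤ) 1 := by
  rintro ⟨d₁, d₂, ε, hε, heq⟩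
  have : NeZero m := ⟨by rintro rfl; exact hnotrect fun i => i.elim0⟩
  obtain ⟨u, hu, v, hv, huv, hdu, hdv⟩ := exists_ne_des_eq_of_not_rectangle hanti hpos hN hnotrect
  set S := multisetPerms N m lam
  set f : (Fin N → Fin m) → ℤ × ℤ := fun w => ((des w : ℤ), (maj w : ℤ))
  set d : ℤ × ℤ := ((d₁ : ℤ), (d₂ : ℤ))
  have hfib : ∀ p, (#{w ∈ S | f w = p} : ℤ) = ε * #{w ∈ S | f w = d - p} :=
    card_fiber_eq_of_sum_single_neg_eq heq
  have h0 : #{w ∈ S | f w = 0} = 1 := card_filter_des_maj_eq_zero ⟨u, hu⟩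
  obtain rfl : ε = 1 := by
    have := hfib 0
    rw [h0, sub_zero] at this
    rcases hε with rfl | rfl <;> omega
  have hsymm (p) : #{w ∈ S | f w = p} = #{w ∈ S | f w = d - p} := by
    exact_mod_cast (hfib p).trans (one_mul _)
  obtain ⟨s, hs⟩ := card_pos.1 (h0 ▸ one_pos)
  have hmax (w) (hw : w ∈ S) (hwD : des w = N - lam 0) : f w = d :=
    apply_eq_of_fst_eq_max hsymm (fun _ _ => Nat.cast_nonneg _)
      (fun w' hw' => Nat.cast_le.2 (des_le_of_mem_multisetPerms hw'))
      (fun w' _ h => by simpa [f] using maj_eq_zero_of_des_eq_zero w' (by simpa [f] using h))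
      ⟨s, mem_filter.1 hs⟩ hw (congrArg Nat.cast hwD)
  have hd : #{w ∈ S | f w = d} = 1 := by rw [← sub_zero d, ← hsymm, h0]
  exact huv (card_le_one.1 hd.le u (mem_filter.2 ⟨hu, hmax u hu hdu⟩) v
    (mem_filter.2 ⟨hv, hmax v hv hdv⟩))
end

section
/- Lemma 2.3: the partition λ is a rectangle if and only if there exists a unique element of S_λ at which the statistic des attains its maximum. Moreover, if λ = (r,…,r) with m parts, then both des and maj attain their maximal values over S_{r,m} at the word w₀ = (m (m−1) ⋯ 2 1)^r, namely des(w₀) = r(m−1) and maj(w₀) = r²·binom(m,2). -/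
open Finset

/-!
A descent at position `p` needs a nonzero letter at `p - 1`, so `des w ≤ N - λ₁` on `S_λ`, with
equality as soon as every nonzero letter is followed by a smaller one. Reading the columns of the
Young diagram of `λ` as decreasing runs `(λ'ₖ - 1) ⋯ 1 0` gives such words, and when `λ` is not a
rectangle, reading the columns in two different orders gives two different maximisers.

For a rectangle `(r^m)`, a strictly decreasing run has at most `m` letters, so every window of
`m` consecutive positions contains a non-descent. Counting these non-descents forces a word with
`r(m-1)` descents to be `w₀`, and applied to every suffix it bounds `maj` by `maj w₀`.
-/

lemma sum_range_eq_choose_two (n : ℕ) : ∑ i ∈ range n, i = n.choose 2 := by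
  rw [sum_range_id, Nat.choose_two_right]

lemma sum_filter_not_dvd_range_mul (r m : ℕ) :
    ∑ i ∈ range (r * m) with ¬ m ∣ i, i = r ^ 2 * m.choose 2 := by
  induction r with
  | zero => simp
  | succ r ih =>
    rcases m with _ | m
    · simp
    have hblock : ∀ s ∈ range m, (if ¬ (m + 1) ∣ r * (m + 1) + (s + 1) then r * (m + 1) + (s + 1)
        else 0) = r * (m + 1) + (s + 1) := fun s hs => if_pos fun h =>
      Nat.not_dvd_of_pos_of_lt s.succ_pos (by simpa using (mem_range.1 hs))
        ((Nat.dvd_add_right (dvd_mul_left _ r)).1 h)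
    have hgauss : ∑ s ∈ range m, (s + 1) = (m + 1).choose 2 := by
      rw [← sum_range_eq_choose_two, sum_range_succ' (fun i => i), add_zero]
    have hC := sum_range_id_mul_two (m + 1)
    rw [sum_range_eq_choose_two, Nat.add_sub_cancel] at hC
    rw [sum_filter] at ih ⊢
    rw [add_mul, one_mul, sum_range_add, ih, sum_range_succ', sum_congr rfl hblock,
      sum_add_distrib, hgauss, add_zero, if_neg (not_not.2 (dvd_mul_left _ r)), sum_const,
      card_range, smul_eq_mul]
    nlinarith [hC]

lemma card_filter_dvd_Ico_le {m N : ℕ} (hmN : m ∣ N) (j : ℕ) :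
    #{i ∈ Ico j N | m ∣ i} ≤ (N - j) / m := by
  rw [← Nat.Ioc_filter_dvd_card_eq_div]
  refine card_le_card_of_injOn (fun i => N - i) (fun i hi => ?_) (fun a ha b hb hab => ?_)
  · simp only [coe_filter, mem_Ico, Set.mem_ofPred_eq, mem_Ioc] at hi ⊢
    exact ⟨⟨by omega, by omega⟩, Nat.dvd_sub hmN hi.2⟩
  · simp only [coe_filter, mem_Ico, Set.mem_ofPred_eq] at ha hb hab
    omega

section Descents

variable {N m : ℕ}

lemma letterAt_of_lt (w : Fin N → Fin m) {i : ℕ} (h : i < N) :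
    letterAt w i = w ⟨i, h⟩ := by
  simp [letterAt, h]

lemma letterAt_lt (w : Fin N → Fin m) {i : ℕ} (h : i < N) : letterAt w i < m := by
  simp [letterAt, h]

lemma mem_desSet {w : Fin N → Fin m} {p : ℕ} :
    p ∈ desSet w ↔ 1 ≤ p ∧ p < N ∧ letterAt w p < letterAt w (p - 1) := by
  simp [desSet, and_assoc]

lemma desSet_subset_image_ne_zero (w : Fin N → Fin m) :
    desSet w ⊆ Finset.image (fun j : Fin N => (j : ℕ) + 1) {j | (w j : ℕ) ≠ 0} := by
  intro p hp
  obtain ⟨hp1, hpN, hlt⟩ := mem_desSet.1 hp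
  refine mem_image.2 ⟨⟨p - 1, by omega⟩, mem_filter.2 ⟨mem_univ _, ?_⟩, by simp; omega⟩
  rw [← letterAt_of_lt w (by omega)]
  omega

lemma des_le_card_ne_zero (w : Fin N → Fin m) : des w ≤ #{j | (w j : ℕ) ≠ 0} :=
  (card_le_card (desSet_subset_image_ne_zero w)).trans card_image_le

lemma des_eq_card_ne_zero {w : Fin N → Fin m}
    (h : ∀ j : Fin N, (w j : ℕ) ≠ 0 → (j : ℕ) + 1 ∈ desSet w) :
    des w = #{j | (w j : ℕ) ≠ 0} := by
  have hinj : Function.Injective fun j : Fin N => (j : ℕ) + 1 := fun i j h =>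
    Fin.ext (by simpa using h)
  refine (des_le_card_ne_zero w).antisymm ?_
  calc #{j | (w j : ℕ) ≠ 0}
      = #(Finset.image (fun j : Fin N => (j : ℕ) + 1) {j | (w j : ℕ) ≠ 0}) :=
        (card_image_of_injective _ hinj).symm
    _ ≤ des w := card_le_card fun p hp => by
        obtain ⟨j, hj, rfl⟩ := mem_image.1 hp
        exact h j (mem_filter.1 hj).2

lemma card_ne_zero_of_mem_multisetPerms {lam : Fin m → ℕ} (hm : 0 < m) {w : Fin N → Fin m}
    (hw : w ∈ multisetPerms N m lam) : #{j | (w j : ℕ) ≠ 0} = N - lam ⟨0, hm⟩ := by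
  have := card_filter_add_card_filter_not (s := univ) (p := fun j : Fin N => w j = ⟨0, hm⟩)
  have h0 := (mem_filter.1 hw).2 ⟨0, hm⟩
  simp only [card_univ, Fintype.card_fin, Fin.ext_iff] at this h0
  simp only [ne_eq]
  omega

lemma des_le_of_forall_ne_zero {lam : Fin m → ℕ} (hm : 0 < m) {w : Fin N → Fin m}
    (hw : w ∈ multisetPerms N m lam)
    (h : ∀ j : Fin N, (w j : ℕ) ≠ 0 → (j : ℕ) + 1 ∈ desSet w) :
    ∀ v ∈ multisetPerms N m lam, des v ≤ des w := fun v hv => by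
  rw [des_eq_card_ne_zero h, card_ne_zero_of_mem_multisetPerms hm hw,
    ← card_ne_zero_of_mem_multisetPerms hm hv]
  exact des_le_card_ne_zero v

end Descents

section Runs

variable {N m : ℕ}

lemma letterAt_add_le_of_forall_mem_desSet (w : Fin N → Fin m) {a : ℕ} :
    ∀ {d : ℕ}, (∀ p ∈ Ioc a (a + d), p ∈ desSet w) → letterAt w (a + d) + d ≤ letterAt w a
  | 0, _ => le_rfl
  | d + 1, h => by
    have ih := letterAt_add_le_of_forall_mem_desSet w (d := d) fun p hp =>
      h p (Ioc_subset_Ioc_right (by omega) hp)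
    have hdes := (mem_desSet.1 (h (a + d + 1) (by simp))).2.2
    rw [Nat.add_sub_cancel] at hdes
    rw [← add_assoc, ← add_assoc]
    omega

lemma exists_mem_Ico_not_mem_desSet (w : Fin N → Fin m) {a : ℕ} (ha : 1 ≤ a)
    (haN : a + m ≤ N) : ∃ p ∈ Ico a (a + m), p ∉ desSet w := by
  by_contra! h
  have hrun := letterAt_add_le_of_forall_mem_desSet w (a := a - 1) (d := m) fun p hp =>
    h p (by simp only [mem_Ioc, mem_Ico] at hp ⊢; omega)
  have := letterAt_lt w (i := a - 1) (by omega)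
  omega

lemma letterAt_eq_of_forall_mem_desSet (w : Fin N → Fin m) {a : ℕ} (haN : a + m ≤ N)
    (h : ∀ p ∈ Ioc a (a + (m - 1)), p ∈ desSet w) {s : ℕ} (hs : s < m) :
    letterAt w (a + s) = m - 1 - s := by
  have hhead := letterAt_add_le_of_forall_mem_desSet w (a := a) (d := s) fun p hp =>
    h p (Ioc_subset_Ioc_right (by omega) hp)
  have htail := letterAt_add_le_of_forall_mem_desSet w (a := a + s) (d := m - 1 - s) fun p hp =>
    h p (by simp only [mem_Ioc] at hp ⊢; omega)
  have := letterAt_lt w (i := a) (by omega)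
  rw [show a + s + (m - 1 - s) = a + (m - 1) by omega] at htail
  omega

lemma card_desSet_inter_Ico_add_div_le (w : Fin N → Fin m) {a b : ℕ} (ha : 1 ≤ a)
    (hb : b ≤ N) : #(desSet w ∩ Ico a b) + (b - a) / m ≤ b - a := by
  induction hn : b - a using Nat.strong_induction_on generalizing a with
  | _ n ih =>
  have hle : #(desSet w ∩ Ico a b) ≤ n := hn ▸ (card_le_card inter_subset_right).trans
    (Nat.card_Ico a b).le
  rcases Nat.lt_or_ge n m with hlt | hge
  · rw [Nat.div_eq_of_lt hlt]
    omega
  rcases Nat.eq_zero_or_pos m with hm | hm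
  · simp only [hm, Nat.div_zero]
    omega
  obtain ⟨p, hp, hpdes⟩ := exists_mem_Ico_not_mem_desSet w ha (by omega)
  have hsplit : desSet w ∩ Ico a b ⊆ (Ico a (a + m)).erase p ∪ (desSet w ∩ Ico (a + m) b) := by
    intro x hx
    simp only [mem_inter, mem_Ico, mem_union, mem_erase] at hx hp ⊢
    by_cases hxm : x < a + m
    · exact Or.inl ⟨fun hxp => hpdes (hxp ▸ hx.1), hx.2.1, hxm⟩
    · exact Or.inr ⟨hx.1, by omega, hx.2.2⟩
  have hfirst : #((Ico a (a + m)).erase p) = m - 1 := by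
    rw [card_erase_of_mem hp, Nat.card_Ico, Nat.add_sub_cancel_left]
  have hrest := ih (n - m) (by omega) (a := a + m) (by omega) (by omega)
  have hdiv := Nat.div_eq_sub_div hm hge
  have := (card_le_card hsplit).trans (card_union_le _ _)
  omega

lemma maj_eq_sum_card_desSet_inter_Ico (w : Fin N → Fin m) :
    maj w = ∑ j ∈ Ico 1 N, #(desSet w ∩ Ico j N) := by
  simp_rw [← filter_mem_eq_inter, card_filter]
  rw [sum_comm, maj]
  refine sum_congr rfl fun i hi => ?_
  obtain ⟨hi1, hiN⟩ := mem_Ico.1 ((filter_subset _ _) hi)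
  rw [← card_filter, show {j ∈ Ico 1 N | i ∈ Ico j N} = Ico 1 (i + 1) by ext; simp; omega,
    Nat.card_Ico, Nat.add_sub_cancel]

end Runs

section Stair

variable {N m R : ℕ} (t : Fin R → ℕ) (ht : ∀ k, t k ≤ m) (hN : ∑ k, t k = N)

/-- The concatenation of the decreasing runs `(t k - 1) ⋯ 1 0`, `k = 0, …, R - 1`. -/
def stairWord : Fin N → Fin m := fun j =>
  let x := finSigmaFinEquiv.symm (Fin.cast hN.symm j)
  ⟨t x.1 - 1 - x.2, by have := x.2.2; have := ht x.1; omega⟩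

lemma stairWord_apply (x : (k : Fin R) × Fin (t k)) :
    (stairWord t ht hN (Fin.cast hN (finSigmaFinEquiv x)) : ℕ) = t x.1 - 1 - x.2 :=
  congrArg (fun y : (k : Fin R) × Fin (t k) => t y.1 - 1 - (y.2 : ℕ)) (by simp)

lemma stairWord_succ_mem_desSet (j : Fin N) (hj : (stairWord t ht hN j : ℕ) ≠ 0) :
    (j : ℕ) + 1 ∈ desSet (stairWord t ht hN) := by
  obtain ⟨⟨k, s⟩, rfl⟩ := (finSigmaFinEquiv.trans (finCongr hN)).surjective j
  simp only [Equiv.trans_apply, finCongr_apply, stairWord_apply] at hj ⊢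
  have hs : (s : ℕ) + 1 < t k := by omega
  set j := Fin.cast hN (finSigmaFinEquiv ⟨k, s⟩)
  set j' := Fin.cast hN (finSigmaFinEquiv ⟨k, ⟨s + 1, hs⟩⟩)
  have hnext : (j' : ℕ) = j + 1 := by simp [j, j', add_assoc]
  have hl' : letterAt (stairWord t ht hN) (j + 1) = t k - 1 - (s + 1) := by
    rw [← hnext, letterAt_of_lt _ j'.2, Fin.eta, stairWord_apply]
  have hl : letterAt (stairWord t ht hN) j = t k - 1 - s := by
    rw [letterAt_of_lt _ j.2, Fin.eta, stairWord_apply]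
  rw [mem_desSet, Nat.add_sub_cancel, hl, hl']
  exact ⟨by omega, hnext ▸ j'.2, by omega⟩

lemma sum_ite_sub_one_sub_eq (n c : ℕ) :
    ∑ s : Fin n, (if n - 1 - s = c then 1 else 0) = if c < n then 1 else 0 := by
  rw [Fin.sum_univ_eq_sum_range (fun s => if n - 1 - s = c then 1 else 0), sum_boole,
    Nat.cast_id]
  split_ifs with hc
  · rw [card_eq_one]
    exact ⟨n - 1 - c, by ext; simp; omega⟩
  · rw [card_eq_zero, filter_eq_empty_iff]
    simp only [mem_range]
    omega

lemma card_stairWord_eq (c : Fin m) :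
    #{j | stairWord t ht hN j = c} = #{k | (c : ℕ) < t k} := by
  simp only [card_filter]
  rw [← (finSigmaFinEquiv.trans (finCongr hN)).sum_comp, Fintype.sum_sigma]
  refine sum_congr rfl fun k _ => ?_
  simp only [Equiv.trans_apply, finCongr_apply, Fin.ext_iff, stairWord_apply]
  exact sum_ite_sub_one_sub_eq (t k) c

lemma stairWord_mem_multisetPerms {lam : Fin m → ℕ}
    (hlam : ∀ c : Fin m, #{k | (c : ℕ) < t k} = lam c) :
    stairWord t ht hN ∈ multisetPerms N m lam :=
  mem_filter.2 ⟨mem_univ _, fun c => (card_stairWord_eq t ht hN c).trans (hlam c)⟩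

lemma stairWord_zero (hR : 0 < R) (ht0 : 0 < t ⟨0, hR⟩) (hN0 : 0 < N) :
    (stairWord t ht hN ⟨0, hN0⟩ : ℕ) = t ⟨0, hR⟩ - 1 := by
  have : (⟨0, hN0⟩ : Fin N) = Fin.cast hN (finSigmaFinEquiv ⟨⟨0, hR⟩, ⟨0, ht0⟩⟩) := by
    ext; simp
  rw [this, stairWord_apply, Nat.sub_zero]

end Stair

section Conjugate

variable {m : ℕ}

lemma lt_card_filter_iff_of_antitone {p : Fin m → Prop} [DecidablePred p] (hp : Antitone p)
    (c : Fin m) : (c : ℕ) < #{i | p i} ↔ p c := by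
  constructor
  · intro h
    by_contra hc
    have hsub : ({i | p i} : Finset (Fin m)) ⊆ Iio c := fun i hi => by
      have hi := (mem_filter.1 hi).2
      exact mem_Iio.2 (lt_of_not_ge fun hci => hc (hp hci hi))
    have := (card_le_card hsub).trans_eq (Fin.card_Iio c)
    omega
  · intro hc
    have hsub : Iic c ⊆ ({i | p i} : Finset (Fin m)) := fun i hi =>
      mem_filter.2 ⟨mem_univ _, hp (mem_Iic.1 hi) hc⟩
    have := (Fin.card_Iic c).symm.trans_le (card_le_card hsub)
    omega

/-- The `k`-th part `λ'ₖ` of the conjugate partition. -/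
def conjPart (lam : Fin m → ℕ) (k : ℕ) : ℕ := #{i | k < lam i}

lemma conjPart_le (lam : Fin m → ℕ) (k : ℕ) : conjPart lam k ≤ m :=
  (card_filter_le _ _).trans_eq (by simp)

lemma lt_conjPart_iff {lam : Fin m → ℕ} (hanti : Antitone lam) (c : Fin m) (k : ℕ) :
    (c : ℕ) < conjPart lam k ↔ k < lam c :=
  lt_card_filter_iff_of_antitone (fun _ _ hij hj => hj.trans_le (hanti hij)) c

lemma sum_conjPart {lam : Fin m → ℕ} {R : ℕ} (hR : ∀ i, lam i ≤ R) :
    ∑ k : Fin R, conjPart lam k = ∑ i, lam i := by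
  simp only [conjPart, card_filter]
  rw [sum_comm]
  refine sum_congr rfl fun i _ => ?_
  rw [← card_filter, Fin.card_filter_val_lt, min_eq_right (hR i)]

lemma card_lt_conjPart {lam : Fin m → ℕ} (hanti : Antitone lam) {R : ℕ} (hR : ∀ i, lam i ≤ R)
    (c : Fin m) : #{k : Fin R | (c : ℕ) < conjPart lam k} = lam c := by
  simp only [lt_conjPart_iff hanti, Fin.card_filter_val_lt, min_eq_right (hR c)]

end Conjugate

lemma not_existsUnique_des_max {N m : ℕ} (hm : 0 < m) {lam : Fin m → ℕ} (hanti : Antitone lam)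
    (hpos : ∀ i, 1 ≤ lam i) (hN : N = ∑ i, lam i) (hlt : lam ⟨m - 1, by omega⟩ < lam ⟨0, hm⟩) :
    ¬ ∃! w : Fin N → Fin m, w ∈ multisetPerms N m lam ∧
        ∀ v ∈ multisetPerms N m lam, des v ≤ des w := by
  set R := lam ⟨0, hm⟩
  have hR : ∀ i, lam i ≤ R := fun i => hanti (Nat.zero_le _)
  have hR0 : 0 < R := hpos _
  set t : Fin R → ℕ := fun k => conjPart lam k
  have hsum : ∑ k, t k = N := (sum_conjPart hR).trans hN.symm
  have hsum' : ∑ k, t (Fin.rev k) = N := (Equiv.sum_comp Fin.revPerm t).trans hsum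
  have hcount : ∀ c : Fin m, #{k | (c : ℕ) < t k} = lam c := card_lt_conjPart hanti hR
  have hcount' : ∀ c : Fin m, #{k | (c : ℕ) < t (Fin.rev k)} = lam c := fun c =>
    (card_equiv Fin.revPerm (by simp)).trans (hcount c)
  set u := stairWord t (fun k => conjPart_le lam k) hsum
  set v := stairWord (fun k => t (Fin.rev k)) (fun k => conjPart_le lam _) hsum'
  have hu : u ∈ multisetPerms N m lam := stairWord_mem_multisetPerms _ _ _ hcount
  have hv : v ∈ multisetPerms N m lam := stairWord_mem_multisetPerms _ _ _ hcount'
  have hN0 : 0 < N :=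
    hN ▸ (hpos ⟨0, hm⟩).trans (single_le_sum (fun _ _ => Nat.zero_le _) (mem_univ _))
  have h0 := (lt_conjPart_iff hanti ⟨m - 1, by omega⟩ 0).2 (hpos _)
  have hlast := (lt_conjPart_iff hanti ⟨m - 1, by omega⟩ (R - 1)).not.2 (by omega)
  have hlast_pos := (lt_conjPart_iff hanti ⟨0, hm⟩ (R - 1)).2 (by omega)
  have hu0 : (u ⟨0, hN0⟩ : ℕ) = conjPart lam 0 - 1 :=
    stairWord_zero t _ hsum hR0 (by simp only [t]; omega) hN0
  have hv0 : (v ⟨0, hN0⟩ : ℕ) = conjPart lam (R - 1) - 1 :=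
    (stairWord_zero (fun k => t (Fin.rev k)) _ hsum' hR0 (by simp [t]; omega) hN0).trans
      (by simp [t])
  rintro ⟨w, -, huniq⟩
  have huv : u = v :=
    (huniq u ⟨hu, des_le_of_forall_ne_zero hm hu (stairWord_succ_mem_desSet _ _ _)⟩).trans
      (huniq v ⟨hv, des_le_of_forall_ne_zero hm hv (stairWord_succ_mem_desSet _ _ _)⟩).symm
  have := hu0.symm.trans ((congrArg (fun x => (x ⟨0, hN0⟩ : ℕ)) huv).trans hv0)
  simp only at h0 hlast hlast_pos
  omega

section Rectangle

variable {N m : ℕ} (hm : 0 < m)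

/-- The word `w₀ = ((m-1) ⋯ 1 0)^r` (letters shifted down by one). -/
def descendingPeriodicWord (N : ℕ) : Fin N → Fin m := fun j => ⟨m - 1 - (j : ℕ) % m, by omega⟩

lemma descendingPeriodicWord_eq_stairWord {r : ℕ} (hN : N = r * m) :
    descendingPeriodicWord hm N =
      stairWord (fun _ : Fin r => m) (fun _ => le_rfl) (by simp [hN]) := by
  funext j
  obtain ⟨⟨k, s⟩, rfl⟩ :=
    ((finSigmaFinEquiv (n := fun _ : Fin r => m)).trans (finCongr (by simp [hN]))).surjective j
  ext
  simp only [Equiv.trans_apply, finCongr_apply, stairWord_apply]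
  simp [descendingPeriodicWord, Nat.mod_eq_of_lt s.2]

lemma descendingPeriodicWord_mem_multisetPerms {r : ℕ} (hN : N = r * m) :
    descendingPeriodicWord hm N ∈ multisetPerms N m fun _ => r := by
  rw [descendingPeriodicWord_eq_stairWord hm hN]
  exact stairWord_mem_multisetPerms _ _ _ fun c => by simp

lemma des_le_des_descendingPeriodicWord {r : ℕ} (hN : N = r * m) :
    ∀ v ∈ multisetPerms N m (fun _ => r), des v ≤ des (descendingPeriodicWord hm N) := by
  rw [descendingPeriodicWord_eq_stairWord hm hN]
  exact des_le_of_forall_ne_zero hm (stairWord_mem_multisetPerms _ _ _ fun c => by simp)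
    (stairWord_succ_mem_desSet _ _ _)

lemma des_descendingPeriodicWord {r : ℕ} (hN : N = r * m) :
    des (descendingPeriodicWord hm N) = r * (m - 1) := by
  have hmem := descendingPeriodicWord_mem_multisetPerms hm hN
  rw [descendingPeriodicWord_eq_stairWord hm hN] at hmem ⊢
  rw [des_eq_card_ne_zero (stairWord_succ_mem_desSet _ _ _),
    card_ne_zero_of_mem_multisetPerms hm hmem, hN, Nat.mul_sub_one]

lemma desSet_descendingPeriodicWord :
    desSet (descendingPeriodicWord hm N) = {i ∈ range N | ¬ m ∣ i} := by
  ext i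
  simp only [mem_desSet, mem_filter, mem_range]
  rcases Nat.eq_zero_or_pos i with rfl | hi
  · simp
  by_cases hiN : i < N
  swap
  · simp [hiN]
  rw [letterAt_of_lt _ hiN, letterAt_of_lt _ (by omega)]
  simp only [descendingPeriodicWord, Nat.dvd_iff_mod_eq_zero]
  obtain ⟨q, s, hs, rfl⟩ : ∃ q s, s < m ∧ i = q * m + s :=
    ⟨i / m, i % m, Nat.mod_lt _ hm, (Nat.div_add_mod' i m).symm⟩
  rcases Nat.eq_zero_or_pos s with rfl | hs0
  · obtain ⟨q, rfl⟩ := Nat.exists_eq_add_one_of_ne_zero (n := q) (by rintro rfl; simp at hi)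
    rw [show (q + 1) * m + 0 - 1 = m - 1 + q * m by rw [add_mul]; omega]
    simp [Nat.add_mul_mod_self_right, Nat.mod_eq_of_lt (Nat.sub_lt hm one_pos)]
  · rw [show q * m + s - 1 = s - 1 + q * m by omega, add_comm (q * m)]
    simp [Nat.add_mul_mod_self_right, Nat.mod_eq_of_lt hs,
      Nat.mod_eq_of_lt (by omega : s - 1 < m)]
    omega

lemma maj_descendingPeriodicWord {r : ℕ} (hN : N = r * m) :
    maj (descendingPeriodicWord hm N) = r ^ 2 * m.choose 2 := by
  rw [maj, desSet_descendingPeriodicWord, hN, sum_filter_not_dvd_range_mul]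

lemma maj_le_maj_descendingPeriodicWord (hmN : m ∣ N) (v : Fin N → Fin m) :
    maj v ≤ maj (descendingPeriodicWord hm N) := by
  rw [maj_eq_sum_card_desSet_inter_Ico, maj_eq_sum_card_desSet_inter_Ico]
  refine sum_le_sum fun j hj => ?_
  have hv := card_desSet_inter_Ico_add_div_le v (mem_Ico.1 hj).1 le_rfl
  have hw : desSet (descendingPeriodicWord hm N) ∩ Ico j N = {i ∈ Ico j N | ¬ m ∣ i} := by
    ext i
    simp only [desSet_descendingPeriodicWord, mem_inter, mem_filter, mem_range, mem_Ico]
    omega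
  have hsplit := card_filter_add_card_filter_not (s := Ico j N) (p := fun i => m ∣ i)
  have := card_filter_dvd_Ico_le hmN j
  rw [Nat.card_Ico] at hsplit
  rw [hw]
  omega

end Rectangle

/-- Each window `[km+1, km+m)` may hold at most one of the `r - 1` non-descents, and the windows
before and after it need `k` and `r - k - 1` of them. -/
lemma mem_desSet_of_le_des {N m r : ℕ} (hN : N = r * m) {v : Fin N → Fin m}
    (hv : r * (m - 1) ≤ des v) {k s : ℕ} (hk : k < r) (hs : 0 < s) (hsm : s < m) :
    k * m + s ∈ desSet v := by
  by_contra hp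
  have hm : 0 < m := hs.trans hsm
  obtain ⟨l, hl⟩ : ∃ l, r = k + 1 + l := ⟨r - k - 1, by omega⟩
  have hN' : N = k * m + m + l * m := by rw [hN, hl]; ring
  rw [Nat.mul_sub_one, ← hN] at hv
  have hbefore := card_desSet_inter_Ico_add_div_le v (a := 1) (b := k * m + 1) le_rfl (by omega)
  have hafter := card_desSet_inter_Ico_add_div_le v (a := k * m + m) (b := N) (by omega) le_rfl
  rw [Nat.add_sub_cancel, Nat.mul_div_cancel _ hm] at hbefore
  rw [show N - (k * m + m) = l * m by omega, Nat.mul_div_cancel _ hm] at hafter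
  have hsub : desSet v ⊆ (desSet v ∩ Ico 1 (k * m + 1)) ∪ (Ico (k * m + 1) (k * m + m)).erase
      (k * m + s) ∪ (desSet v ∩ Ico (k * m + m) N) := by
    intro i hi
    have hi' := mem_desSet.1 hi
    simp only [mem_union, mem_inter, mem_Ico, mem_erase, hi, true_and]
    by_cases hik : i = k * m + s
    · exact absurd (hik ▸ hi) hp
    · omega
  have hwindow : #((Ico (k * m + 1) (k * m + m)).erase (k * m + s)) = m - 2 := by
    rw [card_erase_of_mem (by simp; omega), Nat.card_Ico]
    omega
  have h1 := (card_le_card hsub).trans (card_union_le _ _)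
  have h2 := card_union_le (desSet v ∩ Ico 1 (k * m + 1))
    ((Ico (k * m + 1) (k * m + m)).erase (k * m + s))
  rw [hwindow] at h2
  unfold des at hv
  omega

lemma eq_descendingPeriodicWord_of_le_des {N m r : ℕ} (hm : 0 < m) (hN : N = r * m)
    {v : Fin N → Fin m} (hv : r * (m - 1) ≤ des v) : v = descendingPeriodicWord hm N := by
  funext j
  ext
  obtain ⟨q, s, hs, hj⟩ : ∃ q s, s < m ∧ (j : ℕ) = q * m + s :=
    ⟨j / m, j % m, Nat.mod_lt _ hm, (Nat.div_add_mod' j m).symm⟩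
  have hq : q < r := by
    by_contra! h
    have := Nat.mul_le_mul_right m h
    omega
  have hqN : q * m + m ≤ N := by
    have := Nat.mul_le_mul_right m hq
    rw [Nat.succ_mul] at this
    omega
  have hrun : ∀ p ∈ Ioc (q * m) (q * m + (m - 1)), p ∈ desSet v := fun p hp => by
    obtain ⟨hp1, hp2⟩ := mem_Ioc.1 hp
    have := mem_desSet_of_le_des hN hv hq (s := p - q * m) (by omega) (by omega)
    rwa [Nat.add_sub_cancel' hp1.le] at this
  have := letterAt_eq_of_forall_mem_desSet v hqN hrun hs
  rw [← hj, letterAt_of_lt v j.2] at this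
  simp [this, descendingPeriodicWord, hj, Nat.mod_eq_of_lt hs]

lemma eq_const_mul_of_forall_eq {N m r : ℕ} {lam : Fin m → ℕ} (hN : N = ∑ i, lam i)
    (hr : ∀ i, lam i = r) : lam = (fun _ => r) ∧ N = r * m :=
  ⟨funext hr, by simp [hN, hr, mul_comm]⟩

/-- **Lemma 2.3**: `λ` is a rectangle iff `des` attains its maximum on `S_λ` at a unique
element. Moreover, if `λ = (r^m)`, then both `des` and `maj` attain their maxima at the word
`w₀ = (m (m−1) ⋯ 2 1)^r`, with `des(w₀) = r(m−1)` and `maj(w₀) = r²·binom(m,2)`. -/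
theorem rectangle_iff_unique_des_max (m N : ℕ) (hm : 0 < m) (lam : Fin m → ℕ)
    (hanti : Antitone lam) (hpos : ∀ i, 1 ≤ lam i) (hN : N = ∑ i, lam i) :
    ((∀ i j, lam i = lam j) ↔
      ∃! w : Fin N → Fin m, w ∈ multisetPerms N m lam ∧
        ∀ v ∈ multisetPerms N m lam, des v ≤ des w) ∧
    ∀ r : ℕ, (∀ i, lam i = r) →
      (fun j : Fin N => (⟨m - 1 - ((j : ℕ) % m), by omega⟩ : Fin m)) ∈ multisetPerms N m lam ∧
      (∀ v ∈ multisetPerms N m lam,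
        des v ≤ des (fun j : Fin N => (⟨m - 1 - ((j : ℕ) % m), by omega⟩ : Fin m))) ∧
      (∀ v ∈ multisetPerms N m lam,
        maj v ≤ maj (fun j : Fin N => (⟨m - 1 - ((j : ℕ) % m), by omega⟩ : Fin m))) ∧
      des (fun j : Fin N => (⟨m - 1 - ((j : ℕ) % m), by omega⟩ : Fin m)) = r * (m - 1) ∧
      maj (fun j : Fin N => (⟨m - 1 - ((j : ℕ) % m), by omega⟩ : Fin m)) =
        r ^ 2 * Nat.choose m 2 := by
  refine ⟨⟨fun hall => ?_, fun huniq => ?_⟩, fun r hr => ?_⟩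
  · obtain ⟨r, hr⟩ : ∃ r, ∀ i, lam i = r := ⟨_, fun i => hall i ⟨0, hm⟩⟩
    obtain ⟨rfl, hNr⟩ := eq_const_mul_of_forall_eq hN hr
    exact ⟨_, ⟨descendingPeriodicWord_mem_multisetPerms hm hNr,
      des_le_des_descendingPeriodicWord hm hNr⟩, fun v ⟨_, hv⟩ =>
      eq_descendingPeriodicWord_of_le_des hm hNr <| des_descendingPeriodicWord hm hNr ▸
        hv _ (descendingPeriodicWord_mem_multisetPerms hm hNr)⟩
  · by_contra hne
    refine not_existsUnique_des_max hm hanti hpos hN (lt_of_le_of_ne (hanti (Nat.zero_le _)) ?_)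
      huniq
    intro hlast
    have hconst : ∀ i, lam i = lam ⟨0, hm⟩ := fun i =>
      (hanti (Nat.zero_le _)).antisymm (hlast ▸ hanti (Nat.le_sub_one_of_lt i.2))
    exact hne fun i j => (hconst i).trans (hconst j).symm
  · obtain ⟨rfl, hNr⟩ := eq_const_mul_of_forall_eq hN hr
    exact ⟨descendingPeriodicWord_mem_multisetPerms hm hNr,
      des_le_des_descendingPeriodicWord hm hNr,
      fun v _ => maj_le_maj_descendingPeriodicWord hm (Dvd.intro_left r hNr.symm) v,
      des_descendingPeriodicWord hm hNr, maj_descendingPeriodicWord hm hNr⟩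
end

section
/- Equidistribution (from MacMahon's third proof of Lemma 2.12): for a partition λ = (λ₁, λ₂) and every k ∈ ℕ₀, the number of words w ∈ S_{(λ₁,λ₂)} with exactly k descents equals the number of words w ∈ S_{(λ₁,λ₂)} having exactly k occurrences of the letter 2 among the first λ₁ positions. -/
open Finset

/-!
Both sides equal `C(λ₁, k) * C(λ₂, k)`. For the second statistic, cut the word after position
`λ₁` and choose which `k` of the first `λ₁` letters and which `λ₂ - k` of the last `λ₂`
letters are `2`. For descents, let `D(a, b, k)` count the words with `a` letters `1`, `b`
letters `2` and `k` descents. Splitting off the first letter, and after a leading `2` also the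
second one, gives
  `D(a+1, b+1, k) + D(a, b, k) = D(a, b+1, k) + D(a+1, b, k) + D(a, b, k-1)`
(the last term read as `0` for `k = 0`). Together with `D(a, 0, k) = D(0, b, k) = [k = 0]`
this recurrence is also satisfied by `C(a, k) * C(b, k)` (Pascal's rule), so the two agree.
-/

theorem letterAt_cons_zero {n m : ℕ} (c : Fin m) (u : Fin n → Fin m) :
    letterAt (Fin.cons c u : Fin (n + 1) → Fin m) 0 = c := by
  simp [letterAt]

theorem letterAt_cons_succ {n m : ℕ} (c : Fin m) (u : Fin n → Fin m) (i : ℕ) :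
    letterAt (Fin.cons c u : Fin (n + 1) → Fin m) (i + 1) = letterAt u i := by
  by_cases h : i < n
  · simp only [letterAt, dif_pos h, dif_pos (Nat.succ_lt_succ h)]
    rfl
  · simp [letterAt, h]

theorem des_cons {n m : ℕ} (c : Fin m) (u : Fin n → Fin m) :
    des (Fin.cons c u : Fin (n + 1) → Fin m) =
      des u + if 0 < n ∧ letterAt u 0 < c then 1 else 0 := by
  rcases Nat.eq_zero_or_pos n with rfl | hn
  · simp [des, desSet]
  have hshift : ∑ i ∈ Ico 2 (n + 1),
      (if letterAt (Fin.cons c u : Fin (n + 1) → Fin m) i <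
        letterAt (Fin.cons c u : Fin (n + 1) → Fin m) (i - 1) then 1 else 0) = des u := by
    rw [des, desSet, card_filter, show (2 : ℕ) = 1 + 1 from rfl, ← sum_Ico_add']
    refine sum_congr rfl fun i hi => ?_
    obtain ⟨j, rfl⟩ : ∃ j, i = j + 1 := ⟨i - 1, by simp at hi; omega⟩
    simp [letterAt_cons_succ]
  rw [des, desSet, card_filter, sum_eq_sum_Ico_succ_bot (by omega), hshift, add_comm]
  simp [letterAt_cons_succ (i := 0), letterAt_cons_zero, hn]

theorem des_const {n m : ℕ} (c : Fin m) : des (fun _ : Fin n => c) = 0 := by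
  rw [des, desSet, card_eq_zero, filter_eq_empty_iff]
  intro i hi
  simp only [mem_Ico] at hi
  simp [letterAt, hi.2, show i - 1 < n by omega]

theorem card_filter_fin_cons {n : ℕ} {α : Type*} [Fintype α]
    (p : (Fin (n + 1) → α) → Prop) [DecidablePred p] :
    #{w | p w} = ∑ c, #{u : Fin n → α | p (Fin.cons c u)} := by
  simp only [card_filter]
  rw [← (Fin.consEquiv fun _ => α).sum_comp, Fintype.sum_prod_type]
  rfl

def ones {n : ℕ} (w : Fin n → Fin 2) : ℕ := #{j | w j = 1}

theorem ones_cons {n : ℕ} (c : Fin 2) (u : Fin n → Fin 2) :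
    ones (Fin.cons c u : Fin (n + 1) → Fin 2) = ones u + c := by
  rw [ones, ones, card_filter, card_filter, Fin.sum_univ_succ]
  fin_cases c <;> simp [add_comm]

theorem card_ones_eq (n j : ℕ) : #{u : Fin n → Fin 2 | ones u = j} = n.choose j := by
  induction n generalizing j with
  | zero => cases j <;> simp [ones]
  | succ n ih =>
    rw [card_filter_fin_cons, Fin.sum_univ_two]
    cases j with
    | zero => simp [ones_cons, ih]
    | succ j => simp [ones_cons, ih, Nat.choose_succ_succ, add_comm]

theorem ones_eq_zero_iff {n : ℕ} (w : Fin n → Fin 2) : ones w = 0 ↔ w = fun _ => 0 := by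
  simp only [ones, card_filter_eq_zero_iff, mem_univ, true_implies, funext_iff]
  exact forall_congr' fun j => by omega

theorem ones_eq_length_iff {n : ℕ} (w : Fin n → Fin 2) : ones w = n ↔ w = fun _ => 1 := by
  have h := card_filter_eq_iff (s := univ) (p := fun j => w j = 1)
  rw [card_univ, Fintype.card_fin] at h
  simpa [ones, funext_iff] using h

theorem card_filter_eq_const_and_des {n m : ℕ} (c : Fin m) (k : ℕ) :
    #{w : Fin n → Fin m | w = (fun _ => c) ∧ des w = k} = if k = 0 then 1 else 0 := by
  split_ifs with hk
  · rw [card_eq_one]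
    exact ⟨fun _ => c, by ext w; simp +contextual [hk, des_const]⟩
  · simp only [card_eq_zero, filter_eq_empty_iff]
    rintro w - ⟨rfl, rfl⟩
    exact hk (des_const c)

def desCount (n b k : ℕ) : ℕ := #{w : Fin n → Fin 2 | ones w = b ∧ des w = k}

theorem desCount_zero_ones (n k : ℕ) : desCount n 0 k = if k = 0 then 1 else 0 := by
  simp only [desCount, ones_eq_zero_iff, card_filter_eq_const_and_des]

theorem desCount_self (n k : ℕ) : desCount n n k = if k = 0 then 1 else 0 := by
  simp only [desCount, ones_eq_length_iff, card_filter_eq_const_and_des]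

theorem des_cons_zero {n : ℕ} (u : Fin n → Fin 2) :
    des (Fin.cons 0 u : Fin (n + 1) → Fin 2) = des u := by
  simp [des_cons]

theorem des_cons_one_cons_zero {n : ℕ} (v : Fin n → Fin 2) :
    des (Fin.cons 1 (Fin.cons 0 v) : Fin (n + 2) → Fin 2) = des v + 1 := by
  simp [des_cons, letterAt_cons_zero]

theorem des_cons_one_cons_one {n : ℕ} (v : Fin n → Fin 2) :
    des (Fin.cons 1 (Fin.cons 1 v) : Fin (n + 2) → Fin 2) = des (Fin.cons 1 v) := by
  simp [des_cons, letterAt_cons_zero]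

theorem desCount_succ (n b k : ℕ) :
    desCount (n + 1) b k =
      desCount n b k +
        #{v : Fin n → Fin 2 | ones (Fin.cons 1 v) = b ∧ des (Fin.cons 1 v) = k} := by
  simp [desCount, card_filter_fin_cons, Fin.sum_univ_two, ones_cons, des_cons_zero]

theorem card_cons_one_succ (n b k : ℕ) :
    #{v : Fin (n + 1) → Fin 2 | ones (Fin.cons 1 v) = b + 1 ∧ des (Fin.cons 1 v) = k} =
      #{v : Fin n → Fin 2 | ones v = b ∧ des v + 1 = k} +
        #{v : Fin n → Fin 2 | ones (Fin.cons 1 v) = b ∧ des (Fin.cons 1 v) = k} := by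
  simp [card_filter_fin_cons, Fin.sum_univ_two, ones_cons, des_cons_one_cons_zero,
    des_cons_one_cons_one]

theorem desCount_add_two (n b k : ℕ) :
    desCount (n + 2) (b + 1) k + desCount n b k =
      desCount (n + 1) (b + 1) k + desCount (n + 1) b k +
        #{v : Fin n → Fin 2 | ones v = b ∧ des v + 1 = k} := by
  rw [desCount_succ (n + 1), card_cons_one_succ, desCount_succ n b]
  ring

theorem choose_mul_choose_succ_succ (a b j : ℕ) :
    (a + 1).choose (j + 1) * (b + 1).choose (j + 1) + a.choose (j + 1) * b.choose (j + 1) =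
      a.choose (j + 1) * (b + 1).choose (j + 1) + (a + 1).choose (j + 1) * b.choose (j + 1) +
        a.choose j * b.choose j := by
  simp only [Nat.choose_succ_succ]
  ring

theorem desCount_add_eq_choose_mul_choose (a b k : ℕ) :
    desCount (a + b) b k = a.choose k * b.choose k := by
  induction a generalizing b k with
  | zero => cases k <;> simp [desCount_self]
  | succ a iha =>
    induction b generalizing k with
    | zero => cases k <;> simp [desCount_zero_ones]
    | succ b ihb =>
      have hrec := desCount_add_two (a + b) b k
      have hleft : desCount (a + b + 1) b k = (a + 1).choose k * b.choose k := by
        rw [← ihb, Nat.add_right_comm]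
      have hright : desCount (a + b + 1) (b + 1) k = a.choose k * (b + 1).choose k :=
        iha (b + 1) k
      rw [show a + 1 + (b + 1) = a + b + 2 by ring]
      rw [iha, hright, hleft] at hrec
      cases k with
      | zero => simpa using hrec
      | succ j =>
        have hshift : #{v : Fin (a + b) → Fin 2 | ones v = b ∧ des v + 1 = j + 1} =
            a.choose j * b.choose j := by
          simpa [desCount] using iha b j
        have hpascal := choose_mul_choose_succ_succ a b j
        omega

theorem ones_append {a b : ℕ} (u : Fin a → Fin 2) (v : Fin b → Fin 2) :
    ones (Fin.append u v) = ones u + ones v := by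
  simp only [ones, card_filter, Fin.sum_univ_add, Fin.append_left, Fin.append_right]

theorem card_prefix_ones_append {a b : ℕ} (u : Fin a → Fin 2) (v : Fin b → Fin 2) :
    #{j : Fin (a + b) | (j : ℕ) < a ∧ Fin.append u v j = 1} = ones u := by
  rw [ones, card_filter, card_filter, Fin.sum_univ_add]
  simp

theorem card_ones_add_eq (b k : ℕ) :
    #{v : Fin b → Fin 2 | ones v + k = b} = b.choose k := by
  by_cases hk : k ≤ b
  · rw [← Nat.choose_symm hk, ← card_ones_eq]
    congr 1
    exact filter_congr fun v _ => by omega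
  · rw [Nat.choose_eq_zero_of_lt (by omega), card_eq_zero, filter_eq_empty_iff]
    intro v _
    omega

theorem card_ones_eq_and_prefix_ones_eq (a b k : ℕ) :
    #{w : Fin (a + b) → Fin 2 |
        ones w = b ∧ #{j : Fin (a + b) | (j : ℕ) < a ∧ w j = 1} = k} =
      a.choose k * b.choose k := by
  rw [← card_ones_eq, ← card_ones_add_eq, ← card_product, eq_comm]
  refine card_equiv (Fin.appendEquiv a b) fun uv => ?_
  simp only [mem_product, mem_filter, mem_univ, true_and, Fin.appendEquiv, Equiv.coe_fn_mk,
    ones_append, card_prefix_ones_append]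
  omega

theorem multisetPerms_two (a b : ℕ) :
    multisetPerms (a + b) 2 ![a, b] = ({w | ones w = b} : Finset (Fin (a + b) → Fin 2)) := by
  refine filter_congr fun w _ => ?_
  have hsplit := card_filter_add_card_filter_not (s := univ) (p := fun j : Fin (a + b) => w j = 0)
  have hnot : ∀ j, ¬w j = 0 ↔ w j = 1 := fun j => by omega
  simp only [hnot, card_univ, Fintype.card_fin] at hsplit
  simp only [Fin.forall_fin_two, Matrix.cons_val_zero, Matrix.cons_val_one, ones]
  omega

theorem descents_equidistributed_with_twos_in_first_positions_general
    (l₁ l₂ : ℕ) (k : ℕ) :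
    ((multisetPerms (l₁ + l₂) 2 ![l₁, l₂]).filter (fun w => des w = k)).card =
      ((multisetPerms (l₁ + l₂) 2 ![l₁, l₂]).filter
        (fun w => (Finset.univ.filter
          (fun j : Fin (l₁ + l₂) => (j : ℕ) < l₁ ∧ w j = 1)).card = k)).card := by
  rw [multisetPerms_two, filter_filter, filter_filter]
  exact (desCount_add_eq_choose_mul_choose l₁ l₂ k).trans
    (card_ones_eq_and_prefix_ones_eq l₁ l₂ k).symm

/-- **Equidistribution** (from MacMahon's third proof of Lemma 2.12): for `λ = (λ₁,λ₂)` and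
every `k`, the number of words in `S_{(λ₁,λ₂)}` with exactly `k` descents equals the number
of words with exactly `k` occurrences of the letter `2` among the first `λ₁` positions. -/
theorem descents_equidistributed_with_twos_in_first_positions
    (l₁ l₂ : ℕ) (h₁ : l₂ ≤ l₁) (h₂ : 1 ≤ l₂) (k : ℕ) :
    ((multisetPerms (l₁ + l₂) 2 ![l₁, l₂]).filter (fun w => des w = k)).card =
      ((multisetPerms (l₁ + l₂) 2 ![l₁, l₂]).filter
        (fun w => (Finset.univ.filter
          (fun j : Fin (l₁ + l₂) => (j : ℕ) < l₁ ∧ w j = 1)).card = k)).card :=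
  descents_equidistributed_with_twos_in_first_positions_general l₁ l₂ k
end

section
/- Lemma 3.1: for every prime p and all r ∈ ℕ, k ∈ ℕ₀, the number of subgroups H of ℤ^r with index [ℤ^r : H] = p^k equals the Gaussian binomial coefficient binom(r−1+k, k)_q evaluated at q = p. -/
/-!
A subgroup `H` of finite index in `ℤ × A` is determined by `K = H ∩ A`, the positive generator `m`
of its projection to `ℤ`, and the class modulo `K` of any `a` with `(m, a) ∈ H`; its index is
`m · [A : K]`. Hence `a_n(ℤ × A) = ∑_{e ∣ n} e · a_e(A)`, which for `n = p^k` and `A = ℤ^r` gives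
`a_{p^(k+1)}(ℤ^(r+1)) = a_{p^k}(ℤ^(r+1)) + p^(k+1) · a_{p^(k+1)}(ℤ^r)`: the `q`-Pascal rule
satisfied by `binom(r - 1 + k, k)_p`.
-/

open Finset

/-- `a_n(ℤ^r)`: the number of subgroups of index `n` in `ℤ^r`. -/
noncomputable def subCount (r n : ℕ) : ℕ :=
  Nat.card {H : AddSubgroup (Fin r → ℤ) // H.index = n}

/-- Solutions of the `q`-Pascal rule: `f s k = binom(s + k, k)_q`, with denominators cleared. -/
theorem mul_prod_pow_sub_one_eq_of_qPascal {R : Type*} [CommRing R] (q : R) {f : ℕ → ℕ → R}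
    (hleft : ∀ k, f 0 k = 1) (hright : ∀ s, f s 0 = 1)
    (hpascal : ∀ s k, f (s + 1) (k + 1) = f (s + 1) k + q ^ (k + 1) * f s (k + 1)) (s k : ℕ) :
    f s k * ∏ i ∈ range k, (q ^ (i + 1) - 1) = ∏ i ∈ range k, (q ^ (s + i + 1) - 1) := by
  induction s generalizing k with
  | zero => simp [hleft]
  | succ s ihs =>
    induction k with
    | zero => simp [hright]
    | succ k ihk =>
      have hshift : ∏ i ∈ range (k + 1), (q ^ (s + i + 1) - 1) =
          (∏ i ∈ range k, (q ^ (s + 1 + i + 1) - 1)) * (q ^ (s + 1) - 1) := by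
        rw [prod_range_succ']
        simp only [add_right_comm _ 1, add_zero, ← add_assoc]
      have hs := ihs (k + 1)
      rw [prod_range_succ, hshift] at hs
      rw [hpascal, prod_range_succ, prod_range_succ]
      linear_combination (q ^ (k + 1) - 1) * ihk + q ^ (k + 1) * hs

theorem Nat.div_ne_zero_of_mem_divisors {n e : ℕ} (he : e ∈ n.divisors) : n / e ≠ 0 :=
  (Nat.div_ne_zero_iff_of_dvd (Nat.dvd_of_mem_divisors he)).2
    ⟨(Nat.mem_divisors.1 he).2, (Nat.pos_of_mem_divisors he).ne'⟩

theorem Int.addSubgroup_eq_zmultiples_index (H : AddSubgroup ℤ) :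
    H = AddSubgroup.zmultiples (H.index : ℤ) := by
  obtain ⟨a, rfl⟩ := Int.subgroup_cyclic H
  rw [← AddSubgroup.zmultiples_eq_closure, Int.index_zmultiples, Int.zmultiples_natAbs]

theorem AddSubgroup.index_eq_index_map_fst_mul_index_comap_inr {G G' : Type*} [AddGroup G]
    [AddGroup G'] (H : AddSubgroup (G × G')) [H.Normal] :
    H.index = (H.map (AddMonoidHom.fst G G')).index * (H.comap (AddMonoidHom.inr G G')).index := by
  have hrange : (AddMonoidHom.inr G G').range = (AddMonoidHom.fst G G').ker := by
    ext ⟨a, b⟩; simp [AddMonoidHom.mem_range, Prod.ext_iff, eq_comm, AddSubgroup.mem_prod]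
  rw [← relIndex_mul_index (le_sup_left : H ≤ H ⊔ (AddMonoidHom.fst G G').ker), relIndex_sup_left,
    index_map, (AddMonoidHom.fst G G').range_eq_top_of_surjective Prod.fst_surjective, index_top,
    mul_one, index_comap, hrange, mul_comm]

section IntProd

variable {A : Type*} [AddCommGroup A]

/-- For `m ≠ 0` this is the subgroup generated by `0 × K` and `(m, a)`, for any lift `a` of `c`. -/
def cyclicPreimage (K : AddSubgroup A) (m : ℤ) (c : A ⧸ K) : AddSubgroup (ℤ × A) :=
  (AddSubgroup.zmultiples (m, c)).comap ((AddMonoidHom.id ℤ).prodMap (QuotientAddGroup.mk' K))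

theorem mem_cyclicPreimage {K : AddSubgroup A} {m : ℤ} {c : A ⧸ K} {x : ℤ × A} :
    x ∈ cyclicPreimage K m c ↔ ∃ t : ℤ, t * m = x.1 ∧ t • c = x.2 := by
  simp [cyclicPreimage, AddSubgroup.mem_zmultiples_iff, Prod.ext_iff]

theorem comap_inr_cyclicPreimage {K : AddSubgroup A} {m : ℤ} (hm : m ≠ 0) (c : A ⧸ K) :
    (cyclicPreimage K m c).comap (AddMonoidHom.inr ℤ A) = K := by
  ext a
  simp [mem_cyclicPreimage, hm, eq_comm (a := (0 : A ⧸ K))]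

theorem map_fst_cyclicPreimage (K : AddSubgroup A) (m : ℤ) (c : A ⧸ K) :
    (cyclicPreimage K m c).map (AddMonoidHom.fst ℤ A) = AddSubgroup.zmultiples m := by
  ext b
  simp only [AddSubgroup.mem_map, mem_cyclicPreimage, AddSubgroup.mem_zmultiples_iff]
  constructor
  · rintro ⟨x, ⟨t, ht, -⟩, rfl⟩
    exact ⟨t, ht⟩
  · rintro ⟨t, rfl⟩
    obtain ⟨a, ha⟩ := QuotientAddGroup.mk_surjective (t • c)
    exact ⟨(t • m, a), ⟨t, rfl, ha.symm⟩, rfl⟩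

theorem index_cyclicPreimage {K : AddSubgroup A} {m : ℤ} (hm : m ≠ 0) (c : A ⧸ K) :
    (cyclicPreimage K m c).index = m.natAbs * K.index := by
  rw [AddSubgroup.index_eq_index_map_fst_mul_index_comap_inr, map_fst_cyclicPreimage,
    comap_inr_cyclicPreimage hm, Int.index_zmultiples]

theorem cyclicPreimage_injective (K : AddSubgroup A) {m : ℤ} (hm : m ≠ 0) :
    Function.Injective (cyclicPreimage K m) := by
  intro c c' h
  obtain ⟨a, rfl⟩ := QuotientAddGroup.mk_surjective c
  have hmem : (m, a) ∈ cyclicPreimage K m a := mem_cyclicPreimage.2 ⟨1, one_mul m, one_smul ..⟩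
  obtain ⟨t, ht, htc⟩ := mem_cyclicPreimage.1 (h ▸ hmem)
  obtain rfl : t = 1 := by simpa [hm] using ht
  simpa using htc.symm

theorem eq_cyclicPreimage {H : AddSubgroup (ℤ × A)} {m : ℤ}
    (hfst : H.map (AddMonoidHom.fst ℤ A) = AddSubgroup.zmultiples m) {a : A} (ha : (m, a) ∈ H) :
    H = cyclicPreimage (H.comap (AddMonoidHom.inr ℤ A)) m a := by
  ext x
  have hmem (t : ℤ) (ht : t * m = x.1) :
      x ∈ H ↔ t • (a : A ⧸ H.comap (AddMonoidHom.inr ℤ A)) = x.2 := by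
    have hx : x = t • (m, a) + (0, x.2 - t • a) := by ext <;> simp [ht]
    rw [← QuotientAddGroup.mk_zsmul, eq_comm, QuotientAddGroup.eq_iff_sub_mem,
      AddSubgroup.mem_comap, AddMonoidHom.inr_apply]
    conv_lhs => rw [hx]
    exact H.add_mem_cancel_left (H.zsmul_mem ha t)
  rw [mem_cyclicPreimage]
  constructor
  · intro hx
    obtain ⟨t, ht⟩ := AddSubgroup.mem_zmultiples_iff.1 (hfst ▸ AddSubgroup.mem_map_of_mem _ hx)
    exact ⟨t, by simpa using ht, (hmem t (by simpa using ht)).1 hx⟩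
  · rintro ⟨t, ht, hta⟩
    exact (hmem t ht).2 hta

variable (A) in
def sigmaCyclicPreimage (n : ℕ) :
    (Σ e : n.divisors, Σ K : {K : AddSubgroup A // K.index = e}, A ⧸ K.1) →
      {H : AddSubgroup (ℤ × A) // H.index = n} :=
  fun ⟨e, K, c⟩ => ⟨cyclicPreimage K.1 (n / e : ℕ) c, by
    rw [index_cyclicPreimage (by exact_mod_cast Nat.div_ne_zero_of_mem_divisors e.2),
      Int.natAbs_natCast, K.2, Nat.div_mul_cancel (Nat.dvd_of_mem_divisors e.2)]⟩

theorem sigmaCyclicPreimage_bijective {n : ℕ} (hn : n ≠ 0) :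
    Function.Bijective (sigmaCyclicPreimage A n) := by
  constructor
  · rintro ⟨⟨e, he⟩, ⟨K, hK⟩, c⟩ ⟨⟨e', he'⟩, ⟨K', hK'⟩, c'⟩ h
    have hH := congrArg Subtype.val h
    dsimp only [sigmaCyclicPreimage] at hH
    have hm : ((n / e : ℕ) : ℤ) ≠ 0 := by exact_mod_cast Nat.div_ne_zero_of_mem_divisors he
    have hm' : ((n / e' : ℕ) : ℤ) ≠ 0 := by exact_mod_cast Nat.div_ne_zero_of_mem_divisors he'
    obtain rfl : K = K' := by
      have := congrArg (AddSubgroup.comap (AddMonoidHom.inr ℤ A)) hH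
      rwa [comap_inr_cyclicPreimage hm, comap_inr_cyclicPreimage hm'] at this
    obtain rfl : e = e' := hK.symm.trans hK'
    obtain rfl : c = c' := cyclicPreimage_injective K hm hH
    rfl
  · rintro ⟨H, hH⟩
    set K := H.comap (AddMonoidHom.inr ℤ A)
    set I := H.map (AddMonoidHom.fst ℤ A)
    have hindex : I.index * K.index = n := by
      rw [← hH, AddSubgroup.index_eq_index_map_fst_mul_index_comap_inr]
    have hK : K.index ∈ n.divisors := Nat.mem_divisors.2 ⟨Dvd.intro_left _ hindex, hn⟩
    have hI : n / K.index = I.index := by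
      rw [← hindex, Nat.mul_div_cancel _ (Nat.pos_of_mem_divisors hK)]
    obtain ⟨x, hxH, hx⟩ : ((I.index : ℕ) : ℤ) ∈ I := by
      have := AddSubgroup.mem_zmultiples ((I.index : ℕ) : ℤ)
      rwa [← Int.addSubgroup_eq_zmultiples_index I] at this
    refine ⟨⟨⟨K.index, hK⟩, ⟨K, rfl⟩, x.2⟩, Subtype.ext ?_⟩
    simp only [sigmaCyclicPreimage, hI]
    exact (eq_cyclicPreimage (Int.addSubgroup_eq_zmultiples_index I) (by rwa [← hx])).symm

instance {n : ℕ} (e : n.divisors) (K : {K : AddSubgroup A // K.index = e}) : Finite (A ⧸ K.1) :=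
  Nat.finite_of_card_ne_zero <| by
    rw [← AddSubgroup.index_eq_card, K.2]; exact (Nat.pos_of_mem_divisors e.2).ne'

theorem finite_index_eq_int_prod {n : ℕ} (hn : n ≠ 0)
    (hfin : ∀ e ∈ n.divisors, Finite {K : AddSubgroup A // K.index = e}) :
    Finite {H : AddSubgroup (ℤ × A) // H.index = n} :=
  have (e : n.divisors) := hfin e e.2
  Finite.of_surjective _ (sigmaCyclicPreimage_bijective hn).2

theorem card_index_eq_int_prod {n : ℕ} (hn : n ≠ 0)
    (hfin : ∀ e ∈ n.divisors, Finite {K : AddSubgroup A // K.index = e}) :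
    Nat.card {H : AddSubgroup (ℤ × A) // H.index = n} =
      ∑ e ∈ n.divisors, e * Nat.card {K : AddSubgroup A // K.index = e} := by
  have (e : n.divisors) := hfin e e.2
  rw [← Nat.card_eq_of_bijective _ (sigmaCyclicPreimage_bijective hn), Nat.card_sigma,
    ← Finset.sum_coe_sort n.divisors]
  refine sum_congr rfl fun e _ => ?_
  have := Fintype.ofFinite {K : AddSubgroup A // K.index = e}
  rw [Nat.card_sigma, sum_congr rfl fun K _ => by rw [← AddSubgroup.index_eq_card, K.2], sum_const,
    card_univ, Fintype.card_eq_nat_card, smul_eq_mul, mul_comm]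

end IntProd

def AddEquiv.addSubgroupIndexEqCongr {G G' : Type*} [AddGroup G] [AddGroup G'] (e : G ≃+ G')
    (n : ℕ) : {H : AddSubgroup G // H.index = n} ≃ {H : AddSubgroup G' // H.index = n} :=
  e.mapAddSubgroup.toEquiv.subtypeEquiv fun H => by simp

def Fin.consAddEquiv (M : Type*) [Add M] (r : ℕ) : M × (Fin r → M) ≃+ (Fin (r + 1) → M) :=
  { Fin.consEquiv fun _ => M with
    map_add' := fun x y => (Matrix.cons_add_cons x.1 x.2 y.1 y.2).symm }

theorem finite_index_eq_pi (r : ℕ) {n : ℕ} (hn : n ≠ 0) :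
    Finite {H : AddSubgroup (Fin r → ℤ) // H.index = n} := by
  induction r generalizing n with
  | zero => infer_instance
  | succ r ih =>
    have := finite_index_eq_int_prod hn fun e he => ih (Nat.pos_of_mem_divisors he).ne'
    exact .of_equiv _ ((Fin.consAddEquiv ℤ r).addSubgroupIndexEqCongr n)

theorem subCount_one (r : ℕ) : subCount r 1 = 1 :=
  Nat.card_eq_one_iff_exists.2
    ⟨⟨⊤, AddSubgroup.index_top⟩, fun H => Subtype.ext (AddSubgroup.index_eq_one.1 H.2)⟩

theorem subCount_zero_of_ne_one {n : ℕ} (hn : n ≠ 1) : subCount 0 n = 0 :=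
  have : IsEmpty {H : AddSubgroup (Fin 0 → ℤ) // H.index = n} :=
    ⟨fun ⟨H, hH⟩ => hn (by rw [← hH, Subsingleton.elim H ⊤, AddSubgroup.index_top])⟩
  Nat.card_of_isEmpty

theorem subCount_succ (r : ℕ) {n : ℕ} (hn : n ≠ 0) :
    subCount (r + 1) n = ∑ e ∈ n.divisors, e * subCount r e := by
  rw [subCount, Nat.card_congr ((Fin.consAddEquiv ℤ r).symm.addSubgroupIndexEqCongr n),
    card_index_eq_int_prod hn fun e he => finite_index_eq_pi r (Nat.pos_of_mem_divisors he).ne']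
  rfl

theorem subCount_succ_prime_pow {p : ℕ} (hp : p.Prime) (r k : ℕ) :
    subCount (r + 1) (p ^ k) = ∑ j ∈ range (k + 1), p ^ j * subCount r (p ^ j) := by
  rw [subCount_succ r (pow_ne_zero k hp.ne_zero), Nat.sum_divisors_prime_pow hp]

-- `binom(r - 1 + k, k)_p` with its denominator `∏ (p^i - 1)` cleared.
/-- **Lemma 3.1**: for a prime `p`, the number of subgroups of index `p^k` in `ℤ^r` equals the
Gaussian binomial coefficient `binom(r−1+k,k)_q` evaluated at `q = p`; equivalently (clearing
denominators in `binom(r−1+k,k)_p = Π_{i=1}^k (p^{r−1+i}−1)/(p^i−1)`),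
`a_{p^k}(ℤ^r) · Π_{i=1}^k (p^i − 1) = Π_{i=1}^k (p^{r−1+i} − 1)`. -/
theorem subgroup_count_eq_gaussian_binomial (p : ℕ) (hp : p.Prime) (r k : ℕ) (hr : 0 < r) :
    subCount r (p ^ k) * ∏ i ∈ Finset.Icc 1 k, (p ^ i - 1) =
      ∏ i ∈ Finset.Icc 1 k, (p ^ (r - 1 + i) - 1) := by
  obtain ⟨s, rfl⟩ := Nat.exists_eq_add_one_of_ne_zero hr.ne'
  have hleft (k : ℕ) : subCount 1 (p ^ k) = 1 := by
    rw [subCount_succ_prime_pow hp, sum_eq_single 0]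
    · simp [subCount_one]
    · intro j _ hj
      rw [subCount_zero_of_ne_one (Nat.one_lt_pow hj hp.one_lt).ne', mul_zero]
    · simp
  have hpascal (s k : ℕ) : subCount (s + 2) (p ^ (k + 1)) =
      subCount (s + 2) (p ^ k) + p ^ (k + 1) * subCount (s + 1) (p ^ (k + 1)) := by
    rw [subCount_succ_prime_pow hp, subCount_succ_prime_pow hp, sum_range_succ]
  have key := mul_prod_pow_sub_one_eq_of_qPascal (p : ℤ)
    (f := fun s k => (subCount (s + 1) (p ^ k) : ℤ)) (by simp [hleft]) (by simp [subCount_one])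
    (by intro s k; simp only [hpascal]; push_cast; ring) s k
  have hcast (j : ℕ) : ((p ^ j - 1 : ℕ) : ℤ) = (p : ℤ) ^ j - 1 := by
    rw [Nat.cast_sub (Nat.one_le_pow _ _ hp.pos)]; push_cast; rfl
  simp only [Nat.add_sub_cancel, ← Ico_add_one_right_eq_Icc, prod_Ico_eq_prod_range]
  apply Nat.cast_injective (R := ℤ)
  simp only [Nat.cast_mul, Nat.cast_prod, hcast]
  convert key using 4 <;> ring
end
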